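/- arXiv:1902.07820 — 2 statements merged into one kernel-verified Lean document; each statement's English description precedes it below -/
import Mathlib

section
/- Let g : ℕ → [0,1] satisfy g(0) = 1 − λ and g(r) ≤ 1 − λ′ for all r ≥ 1, where λ, λ′ ∈ (0,1], and suppose (1−λ′) · ρ(A)² < 1 and 1 − λ′ < 1. Then for every integer i ≥ 1, the expected first-passage-cost series ν(i) = c(i) + ∑_{j=1}^∞ α_j c(i+j) converges (is finite), where α_j = ∏_{l=1}^{j} g(l−1) and c(q) = Tr(f^{q+1}(P̄₀)). (Finiteness of ν(i) in the proof of Theorem 1.) -/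
/-!
Unrolling the recursion, `f^n(P̄₀) = Aⁿ P̄₀ (Aⁿ)ᵀ + ∑_{j<n} Aʲ Q (Aʲ)ᵀ`. By Gelfand's formula
`‖Aⁿ‖ ≤ C tⁿ` for every `t > ρ(A)`, so for `t > 1` the costs `c(q)` grow at most like `t^{2q}`,
while `α_{k+1} ≤ (1 - λ')ᵏ`. Since `(1 - λ') · max(1, ρ(A))² < 1` we can choose such a `t` with
`(1 - λ') t² < 1`, and the series is dominated by a convergent geometric series.
-/

open Matrix

/-- The Riccati-type operator `f(X) = A X Aᵀ + Q`. -/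
def fop {n : ℕ} (A Q : Matrix (Fin n) (Fin n) ℝ) (X : Matrix (Fin n) (Fin n) ℝ) :
    Matrix (Fin n) (Fin n) ℝ :=
  A * X * Aᵀ + Q

/-- The spectral radius of a real square matrix: the maximum modulus of its
(complex) eigenvalues. -/
noncomputable def rho {n : ℕ} (A : Matrix (Fin n) (Fin n) ℝ) : ℝ :=
  sSup ((fun z : ℂ => ‖z‖) '' spectrum ℂ (A.map Complex.ofReal))

open Filter Topology Asymptotics

theorem spectrum.exists_norm_pow_le_of_spectralRadius_lt {𝔸 : Type*} [NormedRing 𝔸]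
    [NormedAlgebra ℂ 𝔸] [CompleteSpace 𝔸] (a : 𝔸) {t : ℝ}
    (ht : spectralRadius ℂ a < ENNReal.ofReal t) :
    ∃ C, ∀ n : ℕ, ‖a ^ n‖ ≤ C * t ^ n := by
  have ht0 : 0 < t := ENNReal.ofReal_pos.1 (pos_of_gt ht)
  have hev : ∀ᶠ n : ℕ in atTop, ‖a ^ n‖ ≤ t ^ n := by
    filter_upwards [(pow_norm_pow_one_div_tendsto_nhds_spectralRadius a).eventually_lt_const ht,
      eventually_gt_atTop 0] with n hn hn0
    rw [ENNReal.ofReal_lt_ofReal_iff ht0, one_div,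
      Real.rpow_inv_lt_iff_of_pos (norm_nonneg _) ht0.le (by positivity), Real.rpow_natCast] at hn
    exact hn.le
  have hO : (fun n : ℕ => ‖a ^ n‖) =O[atTop] (fun n => t ^ n) :=
    IsBigO.of_bound 1 <| hev.mono fun n hn => by
      rwa [norm_norm, one_mul, Real.norm_of_nonneg (by positivity)]
  obtain ⟨C, hC⟩ := (isBigO_nat_atTop_iff fun n h => absurd h (by positivity)).1 hO
  exact ⟨C, fun n => by simpa [abs_of_pos ht0] using hC n⟩

theorem geom_sum_le_pow_div_sub_one {x : ℝ} (hx : 1 < x) (n : ℕ) :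
    ∑ j ∈ Finset.range n, x ^ j ≤ x ^ n / (x - 1) := by
  rw [geom_sum_eq hx.ne']
  gcongr
  linarith

theorem prod_range_succ_le_pow {g : ℕ → ℝ} {β : ℝ} (hg : ∀ r, 0 ≤ g r) (hg0 : g 0 ≤ 1)
    (hgβ : ∀ r, 1 ≤ r → g r ≤ β) (k : ℕ) : ∏ l ∈ Finset.range (k + 1), g l ≤ β ^ k := by
  rw [Finset.prod_range_succ']
  calc (∏ l ∈ Finset.range k, g (l + 1)) * g 0 ≤ ∏ l ∈ Finset.range k, g (l + 1) :=
        mul_le_of_le_one_right (Finset.prod_nonneg fun l _ => hg _) hg0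
    _ ≤ ∏ _l ∈ Finset.range k, β :=
        Finset.prod_le_prod (fun l _ => hg _) fun l _ => hgβ _ l.succ_pos
    _ = β ^ k := by simp

theorem exists_one_lt_lt_mul_sq_lt_one {β ρ : ℝ} (hβ : β < 1) (hβρ : β * ρ ^ 2 < 1) :
    ∃ t, 1 < t ∧ ρ < t ∧ β * t ^ 2 < 1 := by
  have hmax : β * max 1 ρ ^ 2 < 1 := by
    rcases le_total 1 ρ with h | h
    · rwa [max_eq_right h]
    · rwa [max_eq_left h, one_pow, mul_one]
  have hnear : ∀ᶠ t in 𝓝[>] max 1 ρ, β * t ^ 2 < 1 :=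
    nhdsWithin_le_nhds <| (by fun_prop : Continuous fun t : ℝ => β * t ^ 2).continuousAt
      |>.eventually_lt continuousAt_const hmax
  obtain ⟨t, ht, hmax_lt⟩ := (hnear.and self_mem_nhdsWithin).exists
  exact ⟨t, (le_max_left _ _).trans_lt hmax_lt, (le_max_right _ _).trans_lt hmax_lt, ht⟩

-- The Frobenius norm is submultiplicative and invariant under transposition.
attribute [local instance] Matrix.frobeniusNormedRing Matrix.frobeniusNormedAlgebra

section Frobenius

variable {m α : Type*} [Fintype m]

section SeminormedAddCommGroup

attribute [local instance] Matrix.frobeniusSeminormedAddCommGroup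

variable [SeminormedAddCommGroup α]

theorem Matrix.norm_apply_le_frobenius_norm {n : Type*} [Fintype n] (X : Matrix m n α)
    (i : m) (j : n) : ‖X i j‖ ≤ ‖X‖ :=
  (PiLp.norm_apply_le (WithLp.toLp 2 (X i)) j).trans
    (PiLp.norm_apply_le (WithLp.toLp 2 fun i => WithLp.toLp 2 (X i)) i)

theorem Matrix.norm_trace_le_card_mul_frobenius_norm (X : Matrix m m α) :
    ‖X.trace‖ ≤ Fintype.card m * ‖X‖ := by
  rw [Matrix.trace]
  simpa using (norm_sum_le _ _).trans
    (Finset.sum_le_card_nsmul Finset.univ _ _ fun i _ => X.norm_apply_le_frobenius_norm i i)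

end SeminormedAddCommGroup

theorem Matrix.abs_trace_mul_mul_transpose_le [DecidableEq m] (B M : Matrix m m ℝ) :
    |(B * M * Bᵀ).trace| ≤ Fintype.card m * (‖B‖ ^ 2 * ‖M‖) := by
  calc |(B * M * Bᵀ).trace| ≤ Fintype.card m * ‖B * M * Bᵀ‖ :=
        (B * M * Bᵀ).norm_trace_le_card_mul_frobenius_norm
    _ ≤ Fintype.card m * (‖B‖ * ‖M‖ * ‖Bᵀ‖) := by
        gcongr; exact (norm_mul_le _ _).trans (by gcongr; exact norm_mul_le _ _)
    _ = Fintype.card m * (‖B‖ ^ 2 * ‖M‖) := by rw [frobenius_norm_transpose]; ring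

end Frobenius

theorem spectralRadius_map_ofReal_le_rho {d : ℕ} (A : Matrix (Fin d) (Fin d) ℝ) :
    spectralRadius ℂ (A.map Complex.ofReal) ≤ ENNReal.ofReal (rho A) :=
  iSup₂_le fun z hz => by
    rw [← enorm_eq_nnnorm, ← ofReal_norm]
    exact ENNReal.ofReal_le_ofReal <|
      le_csSup ((spectrum.isCompact _).image continuous_norm).bddAbove ⟨z, hz, rfl⟩

theorem exists_norm_pow_le_of_rho_lt {d : ℕ} (A : Matrix (Fin d) (Fin d) ℝ) {t : ℝ}
    (ht : rho A < t) : ∃ C, ∀ n : ℕ, ‖A ^ n‖ ≤ C * t ^ n := by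
  have hρ : 0 ≤ rho A := Real.sSup_nonneg (by rintro _ ⟨z, -, rfl⟩; exact norm_nonneg z)
  obtain ⟨C, hC⟩ := spectrum.exists_norm_pow_le_of_spectralRadius_lt (A.map Complex.ofReal) <|
    (spectralRadius_map_ofReal_le_rho A).trans_lt ((ENNReal.ofReal_lt_ofReal_iff_of_nonneg hρ).2 ht)
  refine ⟨C, fun n => ?_⟩
  have hmap : (A ^ n).map Complex.ofReal = A.map Complex.ofReal ^ n :=
    map_pow Complex.ofRealHom.mapMatrix A n
  simpa only [← hmap, frobenius_norm_map_eq _ _ Complex.norm_real] using hC n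

theorem fop_iterate_apply {d : ℕ} (A Q X : Matrix (Fin d) (Fin d) ℝ) (n : ℕ) :
    (fop A Q)^[n] X = A ^ n * X * (A ^ n)ᵀ + ∑ j ∈ Finset.range n, A ^ j * Q * (A ^ j)ᵀ := by
  induction n generalizing X with
  | zero => simp
  | succ n ih =>
    simp only [Function.iterate_succ_apply, ih, fop, pow_succ, transpose_mul, Matrix.mul_add,
      Matrix.add_mul, Matrix.mul_assoc, Finset.sum_range_succ]
    abel

theorem abs_trace_fop_iterate_le {d : ℕ} (A Q P0 : Matrix (Fin d) (Fin d) ℝ) {C t : ℝ}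
    (ht : 1 < t) (hA : ∀ n : ℕ, ‖A ^ n‖ ≤ C * t ^ n) (n : ℕ) :
    |((fop A Q)^[n] P0).trace| ≤ d * C ^ 2 * (‖P0‖ + ‖Q‖ / (t ^ 2 - 1)) * (t ^ 2) ^ n := by
  have hsq : ∀ j, ‖A ^ j‖ ^ 2 ≤ C ^ 2 * (t ^ 2) ^ j := fun j =>
    (pow_le_pow_left₀ (norm_nonneg _) (hA j) 2).trans_eq (by ring)
  have hterm : ∀ (M : Matrix (Fin d) (Fin d) ℝ) j,
      |(A ^ j * M * (A ^ j)ᵀ).trace| ≤ d * C ^ 2 * ‖M‖ * (t ^ 2) ^ j := fun M j => by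
    refine ((A ^ j).abs_trace_mul_mul_transpose_le M).trans ?_
    simpa only [Fintype.card_fin, mul_assoc, mul_comm ‖M‖] using
      mul_le_mul_of_nonneg_left (mul_le_mul_of_nonneg_right (hsq j) (norm_nonneg M))
        (Nat.cast_nonneg d)
  have ht2 : 1 < t ^ 2 := one_lt_pow₀ ht two_ne_zero
  rw [fop_iterate_apply, trace_add, trace_sum]
  calc _ ≤ |(A ^ n * P0 * (A ^ n)ᵀ).trace| + ∑ j ∈ Finset.range n, |(A ^ j * Q * (A ^ j)ᵀ).trace| :=
        (abs_add_le _ _).trans (add_le_add_right (Finset.abs_sum_le_sum_abs _ _) _)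
    _ ≤ d * C ^ 2 * ‖P0‖ * (t ^ 2) ^ n + ∑ j ∈ Finset.range n, d * C ^ 2 * ‖Q‖ * (t ^ 2) ^ j :=
        add_le_add (hterm P0 n) (Finset.sum_le_sum fun j _ => hterm Q j)
    _ ≤ d * C ^ 2 * ‖P0‖ * (t ^ 2) ^ n + d * C ^ 2 * ‖Q‖ * ((t ^ 2) ^ n / (t ^ 2 - 1)) := by
        rw [← Finset.mul_sum]
        gcongr
        exact geom_sum_le_pow_div_sub_one ht2 n
    _ = _ := by ring

/-- The series is reindexed via `j = k + 1`: the summand at `k` is `α_{k+1} c(i+k+1)`. -/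
theorem nu_summable_general {d : ℕ} (A Q P0 : Matrix (Fin d) (Fin d) ℝ)
    (g : ℕ → ℝ) (lam' : ℝ)
    (hg : ∀ r : ℕ, g r ∈ Set.Icc (0 : ℝ) 1)
    (hgr : ∀ r : ℕ, 1 ≤ r → g r ≤ 1 - lam')
    (hstab : (1 - lam') * (rho A) ^ 2 < 1) (hlt : 1 - lam' < 1) :
    ∀ i : ℕ, 1 ≤ i →
      Summable (fun k : ℕ =>
        (∏ l ∈ Finset.range (k + 1), g l) * ((fop A Q)^[i + k + 2] P0).trace) := by
  intro i _
  have hβ : 0 ≤ 1 - lam' := (hg 1).1.trans (hgr 1 le_rfl)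
  obtain ⟨t, ht1, hρt, hβt⟩ := exists_one_lt_lt_mul_sq_lt_one hlt hstab
  obtain ⟨C, hC⟩ := exists_norm_pow_le_of_rho_lt A hρt
  set K := d * C ^ 2 * (‖P0‖ + ‖Q‖ / (t ^ 2 - 1))
  refine Summable.of_norm_bounded
    ((summable_geometric_of_lt_one (by positivity) hβt).mul_left (K * (t ^ 2) ^ (i + 2)))
    fun k => ?_
  have hprod : |∏ l ∈ Finset.range (k + 1), g l| ≤ (1 - lam') ^ k := by
    rw [abs_of_nonneg (Finset.prod_nonneg fun l _ => (hg l).1)]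
    exact prod_range_succ_le_pow (fun r => (hg r).1) (hg 0).2 hgr k
  calc ‖(∏ l ∈ Finset.range (k + 1), g l) * ((fop A Q)^[i + k + 2] P0).trace‖
      ≤ (1 - lam') ^ k * (K * (t ^ 2) ^ (i + k + 2)) := by
        rw [Real.norm_eq_abs, abs_mul]
        exact mul_le_mul hprod (abs_trace_fop_iterate_le A Q P0 ht1 hC _) (abs_nonneg _)
          (pow_nonneg hβ k)
    _ = K * (t ^ 2) ^ (i + 2) * ((1 - lam') * t ^ 2) ^ k := by rw [mul_pow]; ring

/-- Finiteness of the expected first-passage cost `ν(i)` in the proof of Theorem 1: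
for every `i ≥ 1`, the series `∑_{j=1}^∞ α_j c(i+j)` converges, where
`α_j = ∏_{l=1}^{j} g(l−1)` and `c(q) = Tr(f^{q+1}(P̄₀))`.  (The series is reindexed via
`j = k + 1`, so the summand at `k` is `α_{k+1} c(i+k+1) = (∏_{l∈range(k+1)} g l) ·
Tr(f^{i+k+2}(P̄₀))`.) -/
theorem nu_summable {d : ℕ} (A Q P0 : Matrix (Fin d) (Fin d) ℝ)
    (hQ : Q.PosSemidef) (hP0 : P0.PosSemidef)
    (g : ℕ → ℝ) (lam lam' : ℝ)
    (hlam : lam ∈ Set.Ioc (0 : ℝ) 1) (hlam' : lam' ∈ Set.Ioc (0 : ℝ) 1)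
    (hg : ∀ r : ℕ, g r ∈ Set.Icc (0 : ℝ) 1)
    (hg0 : g 0 = 1 - lam) (hgr : ∀ r : ℕ, 1 ≤ r → g r ≤ 1 - lam')
    (hstab : (1 - lam') * (rho A) ^ 2 < 1) (hlt : 1 - lam' < 1) :
    ∀ i : ℕ, 1 ≤ i →
      Summable (fun k : ℕ =>
        (∏ l ∈ Finset.range (k + 1), g l) * ((fop A Q)^[i + k + 2] P0).trace) :=
  nu_summable_general A Q P0 g lam' hg hgr hstab hlt
end

section
/- Suppose P̄₀ ⪯ f(P̄₀) in the Loewner order, and let g : ℕ → [0,1] satisfy g(0) > g(r+1) for the given r ∈ ℕ. If condition (16) fails at state (r,q) (so the suboptimal policy of Proposition 1 takes action 1, retransmission), then condition (16) also fails at state (r, q+z) for every positive integer z. (The suboptimal policy of Proposition 1 is of switching type in the estimation-quality index q.) -/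
/-!
The right-hand side of condition (16) does not depend on `q`, while its left-hand side
`Tr f^{q+2}(P̄₀)` is nondecreasing in `q`: `f` is monotone for the Loewner order, so
`P̄₀ ⪯ f(P̄₀)` makes the iterates `f^k(P̄₀)` increase, and the trace is monotone.
Hence once (16) fails it keeps failing as `q` grows.
-/

open Matrix

/-- Condition (16) at state `(r,q)`:
`Tr(f^{q+2}(P̄₀)) ≤ [(1−g(r+1))Tr(f^{r+2}(P̄₀)) − (1−g(0))Tr(f(P̄₀))]/(g(0)−g(r+1))`. -/
def cond16 {d : ℕ} (A Q P0 : Matrix (Fin d) (Fin d) ℝ) (g : ℕ → ℝ) (r q : ℕ) : Prop :=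
  ((fop A Q)^[q + 2] P0).trace ≤
    ((1 - g (r + 1)) * ((fop A Q)^[r + 2] P0).trace -
        (1 - g 0) * (fop A Q P0).trace) / (g 0 - g (r + 1))

open scoped MatrixOrder

section

variable {d : ℕ} (A Q : Matrix (Fin d) (Fin d) ℝ)

theorem fop_monotone : Monotone (fop A Q) := fun X Y hXY => by
  simpa [fop, star_eq_conjTranspose] using star_right_conjugate_le_conjugate hXY A

theorem trace_fop_iterate_monotone {P0 : Matrix (Fin d) (Fin d) ℝ} (hP0 : P0 ≤ fop A Q P0) :
    Monotone fun k => ((fop A Q)^[k] P0).trace :=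
  (tracePositiveLinearMap (Fin d) ℝ ℝ).monotone.comp
    ((fop_monotone A Q).monotone_iterate_of_le_map hP0)

theorem cond16_antitone {P0 : Matrix (Fin d) (Fin d) ℝ} (hP0 : P0 ≤ fop A Q P0)
    (g : ℕ → ℝ) (r : ℕ) : Antitone (cond16 A Q P0 g r) := fun _ _ hqq' hcond =>
  (trace_fop_iterate_monotone A Q hP0 (by omega)).trans hcond

end

theorem suboptimal_switching_general {d : ℕ} (A Q P0 : Matrix (Fin d) (Fin d) ℝ)
    (hmono : (fop A Q P0 - P0).PosSemidef)
    (g : ℕ → ℝ)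
    (r : ℕ) (q : ℕ)
    (hfail : ¬ cond16 A Q P0 g r q) :
    ∀ z : ℕ, 1 ≤ z → ¬ cond16 A Q P0 g r (q + z) :=
  fun z _ hcond => hfail (cond16_antitone A Q hmono g r (Nat.le_add_right q z) hcond)

/-- The suboptimal policy of Proposition 1 is of switching type in the estimation-quality
index `q`: assuming `P̄₀ ⪯ f(P̄₀)` and `g(r+1) < g(0)`, if condition (16) fails at state
`(r,q)` (so the policy retransmits), then it fails at `(r, q+z)` for every `z ≥ 1`. -/
theorem suboptimal_switching {d : ℕ} (A Q P0 : Matrix (Fin d) (Fin d) ℝ)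
    (hQ : Q.PosSemidef) (hP0 : P0.PosSemidef)
    (hmono : (fop A Q P0 - P0).PosSemidef)
    (g : ℕ → ℝ) (hg : ∀ r : ℕ, g r ∈ Set.Icc (0 : ℝ) 1)
    (r : ℕ) (hgr : g (r + 1) < g 0) (q : ℕ)
    (hfail : ¬ cond16 A Q P0 g r q) :
    ∀ z : ℕ, 1 ≤ z → ¬ cond16 A Q P0 g r (q + z) :=
  suboptimal_switching_general A Q P0 hmono g r q hfail
end
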